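/- The function φ₀(x,y) = (1/4)·x²/(2−y) is convex on the triangle C₀ = conv{(0,0),(0,1),(1,0)}, and its gradient maps C₀ into C₀. -/
import Mathlib


/-- The triangle `C₀ = conv{(0,0),(0,1),(1,0)}` in `ℝ²`. -/
def C0 : Set (ℝ × ℝ) := convexHull ℝ {((0:ℝ),(0:ℝ)), ((0:ℝ),(1:ℝ)), ((1:ℝ),(0:ℝ))}

/-- `φ₀(x,y) = (1/4)·x²/(2−y)`. -/
noncomputable def phi0 (p : ℝ × ℝ) : ℝ := (1 / 4) * p.1 ^ 2 / (2 - p.2)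

/-- The gradient `∇φ₀(x,y) = (x/(2(2−y)), x²/(4(2−y)²))`. -/
noncomputable def gradPhi0 (p : ℝ × ℝ) : ℝ × ℝ :=
  (p.1 / (2 * (2 - p.2)), p.1 ^ 2 / (4 * (2 - p.2) ^ 2))

lemma convex_tri : Convex ℝ {p : ℝ × ℝ | 0 ≤ p.1 ∧ 0 ≤ p.2 ∧ p.1 + p.2 ≤ 1} := by
  intro p hp q hq a b ha hb hab
  simp only [Set.mem_setOf_eq, Prod.fst_add, Prod.snd_add, Prod.smul_fst, Prod.smul_snd,
    smul_eq_mul] at *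
  obtain ⟨h1, h2, h3⟩ := hp
  obtain ⟨h4, h5, h6⟩ := hq
  refine ⟨by positivity, by positivity, by nlinarith⟩

lemma mem_C0_iff (p : ℝ × ℝ) : p ∈ C0 ↔ 0 ≤ p.1 ∧ 0 ≤ p.2 ∧ p.1 + p.2 ≤ 1 := by
  constructor
  · intro hp
    have : C0 ⊆ {p : ℝ × ℝ | 0 ≤ p.1 ∧ 0 ≤ p.2 ∧ p.1 + p.2 ≤ 1} := by
      apply convexHull_min _ convex_tri
      intro q hq
      rcases hq with h | h | h <;> subst h <;> norm_num
    exact this hp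
  · rintro ⟨h1, h2, h3⟩
    have : (Finset.univ : Finset (Fin 3)).centerMass
        ![1 - p.1 - p.2, p.2, p.1] ![((0:ℝ),(0:ℝ)), ((0:ℝ),(1:ℝ)), ((1:ℝ),(0:ℝ))] ∈
        convexHull ℝ ({((0:ℝ),(0:ℝ)), ((0:ℝ),(1:ℝ)), ((1:ℝ),(0:ℝ))} : Set (ℝ × ℝ)) :=
      Finset.centerMass_mem_convexHull _
        (by intro i _
            fin_cases i <;> simp
            all_goals linarith)
        (by simp [Fin.sum_univ_three])
        (by intro i _; fin_cases i <;> simp)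
    have heq : (Finset.univ : Finset (Fin 3)).centerMass
        ![1 - p.1 - p.2, p.2, p.1] ![((0:ℝ),(0:ℝ)), ((0:ℝ),(1:ℝ)), ((1:ℝ),(0:ℝ))] = p := by
      rw [Finset.centerMass]
      simp [Fin.sum_univ_three, Prod.ext_iff, Prod.smul_fst, Prod.smul_snd]
    rw [heq] at this
    exact this

/-- `φ₀` is convex on the triangle `C₀` and its gradient maps `C₀` into `C₀`. -/
theorem stmt_10 : ConvexOn ℝ C0 phi0 ∧ ∀ p ∈ C0, gradPhi0 p ∈ C0 := by
  constructor
  · refine ⟨convex_convexHull ℝ _, ?_⟩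
    intro p hp q hq a b ha hb hab
    rw [mem_C0_iff] at hp hq
    obtain ⟨h1, h2, h3⟩ := hp
    obtain ⟨h4, h5, h6⟩ := hq
    have hs : (0:ℝ) < 2 - p.2 := by linarith
    have ht : (0:ℝ) < 2 - q.2 := by linarith
    simp only [phi0, Prod.fst_add, Prod.snd_add, Prod.smul_fst, Prod.smul_snd, smul_eq_mul]
    have hd : (0:ℝ) < 2 - (a * p.2 + b * q.2) := by nlinarith
    have e1 : a * (1 / 4 * p.1 ^ 2 / (2 - p.2)) = a * (1 / 4 * p.1 ^ 2) / (2 - p.2) := by ring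
    have e2 : b * (1 / 4 * q.1 ^ 2 / (2 - q.2)) = b * (1 / 4 * q.1 ^ 2) / (2 - q.2) := by ring
    rw [e1, e2, div_add_div _ _ (ne_of_gt hs) (ne_of_gt ht),
      div_le_div_iff₀ hd (mul_pos hs ht)]
    have hD : 2 - (a * p.2 + b * q.2) = a * (2 - p.2) + b * (2 - q.2) := by linarith
    rw [hD]
    nlinarith [mul_nonneg (mul_nonneg ha hb) (sq_nonneg (p.1 * (2 - q.2) - q.1 * (2 - p.2))), mul_pos hs ht]
  · intro p hp
    rw [mem_C0_iff] at hp
    obtain ⟨h1, h2, h3⟩ := hp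
    rw [mem_C0_iff]
    have hs : (1:ℝ) ≤ 2 - p.2 := by linarith
    have hs0 : (0:ℝ) < 2 - p.2 := by linarith
    have hx1 : p.1 ≤ 1 := by linarith
    simp only [gradPhi0]
    refine ⟨by positivity, by positivity, ?_⟩
    have hu : p.1 / (2 * (2 - p.2)) ≤ 1 / 2 := by
      rw [div_le_div_iff₀ (by positivity) (by norm_num)]
      nlinarith
    have hv : p.1 ^ 2 / (4 * (2 - p.2) ^ 2) ≤ 1 / 4 := by
      rw [div_le_div_iff₀ (by positivity) (by norm_num)]
      nlinarith
    linarith
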